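/- Let A be a unital (possibly noncommutative) ℂ-algebra and τ : A → ℂ a linear functional with τ(1) = 1. Suppose X₁,…,Xₙ ∈ A form a semicircular family with covariance C ∈ Mₙ(ℝ) with respect to τ. Then for every k ≥ 1 and every real k × n matrix M, the elements Y_i = Σ_{j=1}^n M_{ij}·X_j (i = 1,…,k) form a semicircular family with covariance M·C·Mᵀ with respect to τ. In particular, if C is symmetric positive definite and (X₁,…,Xₙ) is a semicircular family with covariance the identity matrix Iₙ, then C^{1/2}·X = (Σ_j (C^{1/2})_{ij} X_j)_{i=1}^n is a semicircular family with covariance C. -/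

import Mathlib

open scoped Classical
open Matrix

/-- `(X₁,…,Xₙ)` is a semicircular family with covariance `C ∈ Mₙ(ℝ)` with respect to the unital
linear functional `τ` if all joint moments are given by sums over noncrossing pairings:
`τ(X_{i₁}⋯X_{i_k}) = Σ_{π ∈ NC₂(k)} Π_{{a,b} ∈ π} C_{i_a i_b}`.  A pairing is encoded as a
fixed-point-free involution `π` of `Fin k`, noncrossing meaning there are no
`a < b < c < d` with `π a = c` and `π b = d`; each pair is counted once via `a < π a`. -/
def IsSemicircularFamily {A : Type*} [Ring A] [Algebra ℂ A] (τ : A →ₗ[ℂ] ℂ)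
    {n : ℕ} (C : Matrix (Fin n) (Fin n) ℝ) (X : Fin n → A) : Prop :=
  ∀ (k : ℕ) (i : Fin k → Fin n),
    τ (List.ofFn fun a : Fin k => X (i a)).prod
      = ∑ π ∈ Finset.univ.filter (fun π : Equiv.Perm (Fin k) =>
            (∀ a, π (π a) = a) ∧ (∀ a, π a ≠ a) ∧
            ¬∃ a b c d : Fin k, a < b ∧ b < c ∧ c < d ∧ π a = c ∧ π b = d),
          ∏ a ∈ Finset.univ.filter (fun a : Fin k => a < π a),
            ((C (i a) (i (π a)) : ℝ) : ℂ)

/-- The square root of a positive semidefinite matrix (the definition of `Matrix.PosSemidef.sqrt`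
from the older Mathlib, which has since been removed in favour of `CFC.sqrt`). -/
noncomputable def Matrix.PosSemidef.sqrt {n : Type*} {𝕜 : Type*} [Fintype n] [RCLike 𝕜]
    [PartialOrder 𝕜] [DecidableEq n] {A : Matrix n n 𝕜} (hA : A.PosSemidef) : Matrix n n 𝕜 :=
  (hA.1.eigenvectorUnitary : Matrix n n 𝕜) * diagonal ((↑) ∘ (√·) ∘ hA.1.eigenvalues) *
    (star (hA.1.eigenvectorUnitary : Matrix n n 𝕜))

private lemma sqrt_isHermitian_aux {n : ℕ} {C : Matrix (Fin n) (Fin n) ℝ} (hA : C.PosSemidef) :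
    hA.sqrt.IsHermitian := by
  simp only [Matrix.IsHermitian, Matrix.PosSemidef.sqrt, Matrix.conjTranspose_mul,
    Matrix.star_eq_conjTranspose, Matrix.conjTranspose_conjTranspose, Matrix.diagonal_conjTranspose,
    Matrix.mul_assoc]
  congr 2

private lemma sqrt_mul_self_aux {n : ℕ} {C : Matrix (Fin n) (Fin n) ℝ} (hA : C.PosSemidef) :
    hA.sqrt * hA.sqrt = C := by
  conv_rhs => rw [hA.1.spectral_theorem, Unitary.conjStarAlgAut_apply]
  have hU : (star (hA.1.eigenvectorUnitary : Matrix (Fin n) (Fin n) ℝ))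
      * (hA.1.eigenvectorUnitary : Matrix (Fin n) (Fin n) ℝ) = 1 := Unitary.coe_star_mul_self _
  simp only [Matrix.PosSemidef.sqrt]
  rw [show ∀ U D V : Matrix (Fin n) (Fin n) ℝ, U * D * V * (U * D * V) = U * (D * (V * U) * D) * V
    from fun U D V => by simp only [Matrix.mul_assoc], hU, Matrix.mul_one, diagonal_mul_diagonal]
  congr 3
  funext i
  simp [Real.mul_self_sqrt (hA.eigenvalues_nonneg i)]

section Aux

variable {m n : ℕ} (π : Equiv.Perm (Fin m)) (hinv : ∀ a, π (π a) = a) (hfix : ∀ a, π a ≠ a)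

include hinv hfix in
private lemma memS_aux (a : Fin m) (ha : a ∉ Finset.univ.filter (fun a => a < π a)) :
    π a ∈ Finset.univ.filter (fun a => a < π a) := by
  simp only [Finset.mem_filter, Finset.mem_univ, true_and] at *
  rw [hinv]
  exact lt_of_le_of_ne (not_lt.mp ha) (hfix a)

include hinv in
private lemma notS_aux (a : Fin m) (ha : a ∈ Finset.univ.filter (fun a => a < π a)) :
    π a ∉ Finset.univ.filter (fun a => a < π a) := by
  simp only [Finset.mem_filter, Finset.mem_univ, true_and, hinv] at *
  exact not_lt.mpr ha.le

include hinv hfix in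
private lemma prod_split_aux (f : Fin m → ℂ) :
    ∏ a, f a = ∏ a ∈ Finset.univ.filter (fun a => a < π a), (f a * f (π a)) := by
  set S := Finset.univ.filter (fun a : Fin m => a < π a) with hS
  have hdis : Disjoint S (S.image π) := by
    rw [Finset.disjoint_left]
    intro a haS haI
    exact (notS_aux π hinv a haS) (by
      obtain ⟨b, hbS, hba⟩ := Finset.mem_image.mp haI
      rw [← hba, hinv]; exact hbS)
  have hun : S ∪ S.image π = Finset.univ := by
    ext a
    simp only [Finset.mem_union, Finset.mem_univ, iff_true]
    by_cases h : a ∈ S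
    · exact Or.inl h
    · exact Or.inr (Finset.mem_image.mpr ⟨π a, memS_aux π hinv hfix a h, hinv a⟩)
  rw [← hun, Finset.prod_union hdis, Finset.prod_image (fun x _ y _ h => π.injective h),
    Finset.prod_mul_distrib]

include hinv hfix in
private lemma fubini_aux (H : Fin m → Fin n → Fin n → ℂ) :
    ∑ r : Fin m → Fin n, ∏ a ∈ Finset.univ.filter (fun a => a < π a), H a (r a) (r (π a))
      = ∏ a ∈ Finset.univ.filter (fun a => a < π a), ∑ x, ∑ y, H a x y := by
  classical
  set S := Finset.univ.filter (fun a : Fin m => a < π a) with hS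
  let E : (Fin m → Fin n) ≃ ({a // a ∈ S} → Fin n × Fin n) :=
  { toFun := fun r a => (r a.1, r (π a.1))
    invFun := fun g a => if h : a ∈ S then (g ⟨a, h⟩).1
      else (g ⟨π a, memS_aux π hinv hfix a h⟩).2
    left_inv := fun r => funext fun a => by
      by_cases h : a ∈ S
      · simp [h]
      · simp [h, hinv a]
    right_inv := fun g => funext fun a => by
      have h1 : a.1 ∈ S := a.2
      have h2 : π a.1 ∉ S := notS_aux π hinv a.1 h1
      ext
      · simp [h1]
      · simp only [dif_neg h2, hinv, Subtype.coe_eta] }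
  have key := Finset.prod_univ_sum (fun _ : {a // a ∈ S} => (Finset.univ : Finset (Fin n × Fin n)))
      (fun a p => H a.1 p.1 p.2)
  rw [Fintype.piFinset_univ] at key
  calc ∑ r : Fin m → Fin n, ∏ a ∈ S, H a (r a) (r (π a))
      = ∑ r : Fin m → Fin n, ∏ a ∈ S.attach, H a.1 (r a.1) (r (π a.1)) :=
        Finset.sum_congr rfl fun r _ => (Finset.prod_attach S fun a => H a (r a) (r (π a))).symm
    _ = ∑ g : {a // a ∈ S} → Fin n × Fin n, ∏ a ∈ S.attach, H a.1 (g a).1 (g a).2 :=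
        Fintype.sum_bijective E E.bijective _ _ (fun r => rfl)
    _ = ∏ a ∈ S.attach, ∑ p : Fin n × Fin n, H a.1 p.1 p.2 := by
        rw [← Finset.univ_eq_attach]; exact key.symm
    _ = ∏ a ∈ S, ∑ x, ∑ y, H a x y := by
        rw [← Finset.prod_attach S (fun a => ∑ x, ∑ y, H a x y)]
        exact Finset.prod_congr rfl fun a _ => by rw [Fintype.sum_prod_type]

end Aux

private lemma isSemicircularFamily_of_matrix {A : Type*} [Ring A] [Algebra ℂ A]
    (τ : A →ₗ[ℂ] ℂ) {n : ℕ} (C : Matrix (Fin n) (Fin n) ℝ) (X : Fin n → A)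
    (hX : IsSemicircularFamily τ C X) (k : ℕ) (M : Matrix (Fin k) (Fin n) ℝ) :
    IsSemicircularFamily τ (M * C * Mᵀ)
      (fun i : Fin k => ∑ j : Fin n, ((M i j : ℝ) : ℂ) • X j) := by
  classical
  intro m i
  have hexp : (List.ofFn fun a : Fin m => ∑ j : Fin n, ((M (i a) j : ℝ) : ℂ) • X j).prod
      = ∑ r : Fin m → Fin n,
          (∏ a, ((M (i a) (r a) : ℝ) : ℂ)) • (List.ofFn fun a => X (r a)).prod := by
    have h1 : (List.ofFn fun a : Fin m => ∑ j : Fin n, ((M (i a) j : ℝ) : ℂ) • X j).prod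
        = (MultilinearMap.mkPiAlgebraFin ℂ m A)
            (fun a => ∑ j : Fin n, ((M (i a) j : ℝ) : ℂ) • X j) := rfl
    rw [h1, MultilinearMap.map_sum]
    refine Finset.sum_congr rfl fun r _ => ?_
    rw [MultilinearMap.map_smul_univ]
    rfl
  have hmat : ∀ b c : Fin k, (((M * C * Mᵀ) b c : ℝ) : ℂ)
      = ∑ x, ∑ y, ((M b x : ℝ) : ℂ) * ((M c y : ℝ) : ℂ) * ((C x y : ℝ) : ℂ) := by
    intro b c
    simp only [Matrix.mul_apply, Matrix.transpose_apply]
    push_cast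
    simp_rw [Finset.sum_mul]
    rw [Finset.sum_comm]
    exact Finset.sum_congr rfl fun x _ => Finset.sum_congr rfl fun y _ => by ring
  calc τ (List.ofFn fun a : Fin m => ∑ j : Fin n, ((M (i a) j : ℝ) : ℂ) • X j).prod
      = ∑ r : Fin m → Fin n, (∏ a, ((M (i a) (r a) : ℝ) : ℂ))
          * τ ((List.ofFn fun a => X (r a)).prod) := by
        rw [hexp, map_sum]
        exact Finset.sum_congr rfl fun r _ => by rw [LinearMap.map_smul, smul_eq_mul]
    _ = ∑ r : Fin m → Fin n, ∑ π ∈ Finset.univ.filter (fun π : Equiv.Perm (Fin m) =>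
            (∀ a, π (π a) = a) ∧ (∀ a, π a ≠ a) ∧
            ¬∃ a b c d : Fin m, a < b ∧ b < c ∧ c < d ∧ π a = c ∧ π b = d),
          (∏ a, ((M (i a) (r a) : ℝ) : ℂ)) * ∏ a ∈ Finset.univ.filter (fun a : Fin m => a < π a),
            ((C (r a) (r (π a)) : ℝ) : ℂ) := by
        refine Finset.sum_congr rfl fun r _ => ?_
        rw [hX m r, Finset.mul_sum]
    _ = ∑ π ∈ Finset.univ.filter (fun π : Equiv.Perm (Fin m) =>
            (∀ a, π (π a) = a) ∧ (∀ a, π a ≠ a) ∧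
            ¬∃ a b c d : Fin m, a < b ∧ b < c ∧ c < d ∧ π a = c ∧ π b = d),
          ∑ r : Fin m → Fin n,
          (∏ a, ((M (i a) (r a) : ℝ) : ℂ)) * ∏ a ∈ Finset.univ.filter (fun a : Fin m => a < π a),
            ((C (r a) (r (π a)) : ℝ) : ℂ) := Finset.sum_comm
    _ = ∑ π ∈ Finset.univ.filter (fun π : Equiv.Perm (Fin m) =>
            (∀ a, π (π a) = a) ∧ (∀ a, π a ≠ a) ∧
            ¬∃ a b c d : Fin m, a < b ∧ b < c ∧ c < d ∧ π a = c ∧ π b = d),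
          ∏ a ∈ Finset.univ.filter (fun a : Fin m => a < π a),
            (((M * C * Mᵀ) (i a) (i (π a)) : ℝ) : ℂ) := by
        refine Finset.sum_congr rfl fun π hπ => ?_
        simp only [Finset.mem_filter, Finset.mem_univ, true_and] at hπ
        obtain ⟨hinv, hfix, -⟩ := hπ
        have hr : ∀ r : Fin m → Fin n,
            (∏ a, ((M (i a) (r a) : ℝ) : ℂ))
              * ∏ a ∈ Finset.univ.filter (fun a : Fin m => a < π a), ((C (r a) (r (π a)) : ℝ) : ℂ)
            = ∏ a ∈ Finset.univ.filter (fun a : Fin m => a < π a),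
                (((M (i a) (r a) : ℝ) : ℂ) * ((M (i (π a)) (r (π a)) : ℝ) : ℂ)
                  * ((C (r a) (r (π a)) : ℝ) : ℂ)) := by
          intro r
          rw [prod_split_aux π hinv hfix (fun a => ((M (i a) (r a) : ℝ) : ℂ)),
            ← Finset.prod_mul_distrib]
        simp_rw [hr]
        rw [fubini_aux π hinv hfix (fun a x y => ((M (i a) x : ℝ) : ℂ)
          * ((M (i (π a)) y : ℝ) : ℂ) * ((C x y : ℝ) : ℂ))]
        exact Finset.prod_congr rfl fun a _ => (hmat (i a) (i (π a))).symm

/-- Semicircular families are stable under linear transformations: if `(X₁,…,Xₙ)` is a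
semicircular family with covariance `C` w.r.t. a unital linear functional `τ`, then for any real
`k × n` matrix `M` the tuple `Y_i = Σ_j M_{ij} X_j` is a semicircular family with covariance
`M C Mᵀ`.  In particular, if `C` is symmetric positive definite and `(X₁,…,Xₙ)` is semicircular
with covariance `Iₙ`, then `C^{1/2} X` is a semicircular family with covariance `C`. -/
theorem isSemicircularFamily_linear_map {A : Type*} [Ring A] [Algebra ℂ A]
    (τ : A →ₗ[ℂ] ℂ) (hτ : τ 1 = 1) {n : ℕ} :
    (∀ (C : Matrix (Fin n) (Fin n) ℝ) (X : Fin n → A), IsSemicircularFamily τ C X →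
      ∀ (k : ℕ) (_hk : 1 ≤ k) (M : Matrix (Fin k) (Fin n) ℝ),
        IsSemicircularFamily τ (M * C * Mᵀ)
          (fun i : Fin k => ∑ j : Fin n, ((M i j : ℝ) : ℂ) • X j))
    ∧ (∀ (C : Matrix (Fin n) (Fin n) ℝ) (hC : C.PosDef) (X : Fin n → A),
        IsSemicircularFamily τ (1 : Matrix (Fin n) (Fin n) ℝ) X →
        IsSemicircularFamily τ C
          (fun i : Fin n => ∑ j : Fin n, ((hC.posSemidef.sqrt i j : ℝ) : ℂ) • X j)) := by
  constructor
  · intro C X hX k _ M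
    exact isSemicircularFamily_of_matrix τ C X hX k M
  · intro C hC X hX
    have h := isSemicircularFamily_of_matrix τ 1 X hX n hC.posSemidef.sqrt
    have hsq : hC.posSemidef.sqrt * 1 * hC.posSemidef.sqrtᵀ = C := by
      have hherm : hC.posSemidef.sqrt.IsHermitian := sqrt_isHermitian_aux hC.posSemidef
      have ht : hC.posSemidef.sqrtᵀ = hC.posSemidef.sqrt := by
        ext a b
        rw [Matrix.transpose_apply, ← hherm.apply b a, star_trivial]
      rw [mul_one, ht, sqrt_mul_self_aux hC.posSemidef]
    rwa [hsq] at h
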